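/- arXiv:2309.04463 — 7 statements merged into one kernel-verified Lean document; each statement's English description precedes it below -/
import Mathlib

section
/- Let n ≥ 1 and p ≥ 1. Let f : ℝⁿ → ℝ be a C² convex function that is a submersion, i.e. ∇f(x) ≠ 0 for every x ∈ ℝⁿ. Then the vector field V(x) = ‖∇f(x)‖^{p-2} ∇f(x) has nonnegative divergence at every point: div V(x) = Σ_{i=1}^n ⟨(fderiv of V at x)(e_i), e_i⟩ ≥ 0 for every x, where (e_i) is the standard orthonormal basis. (Theorem 1.3 in the Euclidean case, in pointwise form.) -/
open scoped RealInnerProductSpace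
open MeasureTheory Filter Metric Real

/-! Write `w = ∇f(x) ≠ 0` and `H = D(∇f)(x)`. By the chain rule
`DV(x) = ‖w‖^(p-2) H + (p-2) ‖w‖^(p-4) ⟪H ·, w⟫ w`, so
`div V(x) = ‖w‖^(p-4) (‖w‖² tr H + (p-2) ⟪H w, w⟫)`.
Convexity makes `H` positive semidefinite, and completing `w / ‖w‖` to an orthonormal basis gives
`0 ≤ ⟪H w, w⟫ ≤ ‖w‖² tr H`; hence the bracket is at least `(p-1) ⟪H w, w⟫ ≥ 0`. -/

open InnerProductSpace

lemma rpow_mul_add_mul_rpow_mul_nonneg {a t q p : ℝ} (ha : 0 < a) (hp : 1 ≤ p) (hq : 0 ≤ q)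
    (hqt : q ≤ a ^ 2 * t) :
    0 ≤ a ^ (p - 2) * t + ((p - 2) * a ^ (p - 2 - 2)) * q := by
  have hsplit : a ^ (p - 2) = a ^ (p - 2 - 2) * a ^ 2 := by
    rw [← Real.rpow_natCast, ← Real.rpow_add ha]
    norm_num
  have hpos : 0 < a ^ (p - 2 - 2) := Real.rpow_pos_of_pos ha _
  rw [hsplit]
  nlinarith [mul_nonneg hpos.le (sub_nonneg.2 hqt),
    mul_nonneg (mul_nonneg hpos.le (sub_nonneg.2 hp)) hq]

section InnerProductSpace

variable {E : Type*} [NormedAddCommGroup E] [InnerProductSpace ℝ E]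

lemma hasDerivAt_const_add_smul (x v : E) (t : ℝ) :
    HasDerivAt (fun t : ℝ => x + t • v) v t := by
  simpa using ((hasDerivAt_id t).smul_const v).const_add x

lemma ContDiff.differentiable_gradient [CompleteSpace E] {f : E → ℝ} (hf : ContDiff ℝ 2 f) :
    Differentiable ℝ (gradient f) :=
  ((toDual ℝ E).symm.contDiff.comp (hf.fderiv_right le_rfl)).differentiable one_ne_zero

lemma ConvexOn.monotone_inner_gradient_line [CompleteSpace E] {f : E → ℝ}
    (hconv : ConvexOn ℝ Set.univ f) (hf : Differentiable ℝ f) (x v : E) :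
    Monotone fun t : ℝ => ⟪gradient f (x + t • v), v⟫ := by
  have hderiv (t : ℝ) :
      HasDerivAt (fun t : ℝ => f (x + t • v)) ⟪gradient f (x + t • v), v⟫ t := by
    rw [inner_gradient_left]
    exact (hf _).hasFDerivAt.comp_hasDerivAt t (hasDerivAt_const_add_smul x v t)
  have hline : ConvexOn ℝ Set.univ fun t : ℝ => f (x + t • v) := by
    simpa [Function.comp_def, AffineMap.lineMap_apply, add_comm]
      using hconv.comp_affineMap (AffineMap.lineMap x (x + v))
  intro a b hab
  simpa only [(hderiv _).deriv] using hline.monotoneOn_deriv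
    (fun t _ => (hderiv t).differentiableAt) (Set.mem_univ a) (Set.mem_univ b) hab

lemma ConvexOn.inner_fderiv_gradient_apply_self_nonneg [CompleteSpace E] {f : E → ℝ}
    (hconv : ConvexOn ℝ Set.univ f) (hf : Differentiable ℝ f) {x : E}
    (hg : DifferentiableAt ℝ (gradient f) x) (v : E) :
    0 ≤ ⟪fderiv ℝ (gradient f) x v, v⟫ := by
  have hg' : HasFDerivAt (gradient f) (fderiv ℝ (gradient f) x) (x + (0 : ℝ) • v) := by
    simpa using hg.hasFDerivAt
  have hderiv : HasDerivAt (fun t : ℝ => ⟪gradient f (x + t • v), v⟫)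
      ⟪fderiv ℝ (gradient f) x v, v⟫ 0 := by
    simpa using (hg'.comp_hasDerivAt 0 (hasDerivAt_const_add_smul x v 0)).inner ℝ
      (hasDerivAt_const (0 : ℝ) v)
  rw [← hderiv.deriv]
  exact (hconv.monotone_inner_gradient_line hf x v).deriv_nonneg

lemma hasFDerivAt_norm_rpow_of_ne_zero {x : E} (hx : x ≠ 0) (r : ℝ) :
    HasFDerivAt (fun y : E => ‖y‖ ^ r) ((r * ‖x‖ ^ (r - 2)) • innerSL ℝ x) x := by
  apply HasStrictFDerivAt.hasFDerivAt
  convert! (hasStrictFDerivAt_norm_sq x).rpow_const (p := r / 2) (by simp [hx]) using 0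
  simp_rw [← Real.rpow_natCast_mul (norm_nonneg _), ← Nat.cast_smul_eq_nsmul ℝ, smul_smul]
  ring_nf

lemma hasFDerivAt_norm_rpow_smul_self {x : E} (hx : x ≠ 0) (r : ℝ) :
    HasFDerivAt (fun y : E => ‖y‖ ^ r • y)
      (‖x‖ ^ r • ContinuousLinearMap.id ℝ E + (r * ‖x‖ ^ (r - 2)) • rankOne ℝ x x) x := by
  refine ((hasFDerivAt_norm_rpow_of_ne_zero hx r).smul (hasFDerivAt_id x)).congr_fderiv ?_
  ext v
  simp [smul_smul]

section FiniteDimensional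

variable [FiniteDimensional ℝ E]

lemma inner_apply_self_le_trace {T : E →ₗ[ℝ] E} (hT : ∀ v, 0 ≤ ⟪T v, v⟫) {u : E}
    (hu : ‖u‖ = 1) :
    ⟪T u, u⟫ ≤ LinearMap.trace ℝ E T := by
  have horth : Orthonormal ℝ ((↑) : ({u} : Set E) → E) :=
    ⟨fun i => by rw [Set.mem_singleton_iff.1 i.2, hu],
      fun i j hij => absurd (Subsingleton.elim i j) hij⟩
  obtain ⟨s, b, hus, hb⟩ := horth.exists_orthonormalBasis_extension
  have hmem : u ∈ s := hus rfl
  rw [LinearMap.trace_eq_sum_inner T b]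
  calc ⟪T u, u⟫ = ⟪b ⟨u, hmem⟩, T (b ⟨u, hmem⟩)⟫ := by simp [hb, real_inner_comm]
    _ ≤ ∑ i, ⟪b i, T (b i)⟫ :=
      Finset.single_le_sum (f := fun i => ⟪b i, T (b i)⟫)
        (fun i _ => real_inner_comm (T (b i)) (b i) ▸ hT (b i)) (Finset.mem_univ _)

lemma inner_apply_self_le_norm_sq_mul_trace {T : E →ₗ[ℝ] E} (hT : ∀ v, 0 ≤ ⟪T v, v⟫) (w : E) :
    ⟪T w, w⟫ ≤ ‖w‖ ^ 2 * LinearMap.trace ℝ E T := by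
  rcases eq_or_ne w 0 with rfl | hw
  · simp
  calc ⟪T w, w⟫ = ‖w‖ ^ 2 * ⟪T (‖w‖⁻¹ • w), ‖w‖⁻¹ • w⟫ := by
        rw [map_smul, real_inner_smul_left, real_inner_smul_right]
        field_simp
    _ ≤ _ := by gcongr; exact inner_apply_self_le_trace hT (norm_smul_inv_norm hw)

lemma trace_smul_id_add_smul_rankOne_comp (a b : ℝ) (w : E) (T : E →L[ℝ] E) :
    LinearMap.trace ℝ E ((a • ContinuousLinearMap.id ℝ E + b • rankOne ℝ w w) ∘L T)
      = a * LinearMap.trace ℝ E T + b * ⟪T w, w⟫ := by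
  rw [ContinuousLinearMap.add_comp, ContinuousLinearMap.smul_comp, ContinuousLinearMap.smul_comp,
    ContinuousLinearMap.id_comp, ContinuousLinearMap.toLinearMap_add,
    ContinuousLinearMap.toLinearMap_smul, ContinuousLinearMap.toLinearMap_smul,
    ContinuousLinearMap.toLinearMap_comp, map_add, map_smul, map_smul,
    LinearMap.trace_comp_comm', ← ContinuousLinearMap.toLinearMap_comp,
    comp_rankOne, trace_rankOne, smul_eq_mul, smul_eq_mul, real_inner_comm]

lemma trace_fderiv_norm_rpow_smul_self_comp_nonneg {T : E →L[ℝ] E}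
    (hT : ∀ v, 0 ≤ ⟪T v, v⟫) {w : E} (hw : w ≠ 0) {p : ℝ} (hp : 1 ≤ p) :
    0 ≤ LinearMap.trace ℝ E ((‖w‖ ^ (p - 2) • ContinuousLinearMap.id ℝ E
      + ((p - 2) * ‖w‖ ^ (p - 2 - 2)) • rankOne ℝ w w) ∘L T) := by
  rw [trace_smul_id_add_smul_rankOne_comp]
  exact rpow_mul_add_mul_rpow_mul_nonneg (norm_pos_iff.2 hw) hp (hT w)
    (inner_apply_self_le_norm_sq_mul_trace hT w)

end FiniteDimensional

end InnerProductSpace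

lemma EuclideanSpace.sum_inner_apply_single_self_eq_trace {ι : Type*} [Fintype ι]
    [DecidableEq ι] (A : EuclideanSpace ℝ ι →L[ℝ] EuclideanSpace ℝ ι) :
    ∑ i, ⟪A (EuclideanSpace.single i 1), EuclideanSpace.single i 1⟫
      = LinearMap.trace ℝ (EuclideanSpace ℝ ι) A := by
  rw [LinearMap.trace_eq_sum_inner (A : EuclideanSpace ℝ ι →ₗ[ℝ] _)
    (EuclideanSpace.basisFun ι ℝ)]
  simp [real_inner_comm]

theorem convex_C2_submersion_div_nonneg_general
    (n : ℕ) (p : ℝ) (hp : 1 ≤ p)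
    (f : EuclideanSpace ℝ (Fin n) → ℝ)
    (hf : ContDiff ℝ 2 f)
    (hconv : ConvexOn ℝ Set.univ f)
    (hsub : ∀ x, gradient f x ≠ 0)
    (V : EuclideanSpace ℝ (Fin n) → EuclideanSpace ℝ (Fin n))
    (hV : V = fun x => ‖gradient f x‖ ^ (p - 2) • gradient f x)
    (x : EuclideanSpace ℝ (Fin n)) :
    0 ≤ ∑ i : Fin n,
        ⟪fderiv ℝ V x (EuclideanSpace.single i 1), EuclideanSpace.single i 1⟫ := by
  have hg : Differentiable ℝ (gradient f) := hf.differentiable_gradient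
  have hHessian : ∀ v, 0 ≤ ⟪fderiv ℝ (gradient f) x v, v⟫ :=
    hconv.inner_fderiv_gradient_apply_self_nonneg (hf.differentiable two_ne_zero) (hg x)
  subst hV
  have hV' : HasFDerivAt (fun y => ‖gradient f y‖ ^ (p - 2) • gradient f y) _ x :=
    (hasFDerivAt_norm_rpow_smul_self (hsub x) (p - 2)).comp x (hg x).hasFDerivAt
  rw [hV'.fderiv, EuclideanSpace.sum_inner_apply_single_self_eq_trace]
  exact trace_fderiv_norm_rpow_smul_self_comp_nonneg hHessian (hsub x) hp

/-- Theorem 1.3 in the Euclidean case, pointwise form.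
Let `p ≥ 1` and let `f : ℝⁿ → ℝ` be a `C²` convex function which is a
submersion (`∇f(x) ≠ 0` everywhere).  Then the vector field
`V = ‖∇f‖^(p-2) ∇f` has nonnegative divergence at every point, where the
divergence is the trace of the Fréchet derivative of `V`. -/
theorem convex_C2_submersion_div_nonneg
    (n : ℕ) (hn : 1 ≤ n) (p : ℝ) (hp : 1 ≤ p)
    (f : EuclideanSpace ℝ (Fin n) → ℝ)
    (hf : ContDiff ℝ 2 f)
    (hconv : ConvexOn ℝ Set.univ f)
    (hsub : ∀ x, gradient f x ≠ 0)
    (V : EuclideanSpace ℝ (Fin n) → EuclideanSpace ℝ (Fin n))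
    (hV : V = fun x => ‖gradient f x‖ ^ (p - 2) • gradient f x)
    (x : EuclideanSpace ℝ (Fin n)) :
    0 ≤ ∑ i : Fin n,
        ⟪fderiv ℝ V x (EuclideanSpace.single i 1), EuclideanSpace.single i 1⟫ :=
  convex_C2_submersion_div_nonneg_general n p hp f hf hconv hsub V hV x
end

section
/- Let n ≥ 1, p ≥ 1, and ε > 0. Let f : ℝⁿ → ℝ be a C² convex function. Then the vector field V_ε(x) = (‖∇f(x)‖² + ε)^{(p-2)/2} ∇f(x) has nonnegative divergence at every point of ℝⁿ: div V_ε(x) = Σ_{i=1}^n ⟨(fderiv of V_ε at x)(e_i), e_i⟩ ≥ 0. (Inequality (1.7) of the paper, with ε = 1/j, in the Euclidean case.) -/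
open scoped RealInnerProductSpace

/-!
Writing `u = ∇f(x)`, `H = D²f(x)` and `s = ‖u‖² + ε`, the product rule gives
`div V_ε(x) = s^((p-2)/2) tr H + (p - 2) s^((p-4)/2) ⟪H u, u⟫
  = s^((p-4)/2) (ε tr H + (‖u‖² tr H - ⟪H u, u⟫) + (p - 1) ⟪H u, u⟫)`.
Convexity makes `H` positive semidefinite, so `tr H ≥ 0`, `⟪H u, u⟫ ≥ 0` and, expanding `u` in an
eigenbasis of `H`, `⟪H u, u⟫ ≤ tr H ‖u‖²`; all three summands are then nonnegative.
-/

theorem LinearMap.IsPositive.inner_map_self_le_trace_mul_norm_sq {E : Type*}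
    [NormedAddCommGroup E] [InnerProductSpace ℝ E] [FiniteDimensional ℝ E]
    {T : E →ₗ[ℝ] E} (hT : T.IsPositive) (u : E) :
    ⟪T u, u⟫ ≤ LinearMap.trace ℝ E T * ‖u‖ ^ 2 := by
  set b := hT.isSymmetric.eigenvectorBasis rfl
  set μ := hT.isSymmetric.eigenvalues rfl
  have hb : ∀ i, T (b i) = μ i • b i := hT.isSymmetric.apply_eigenvectorBasis rfl
  have hspectral : ⟪T u, u⟫ = ∑ i, μ i * ⟪b i, u⟫ ^ 2 := by
    rw [← b.sum_inner_mul_inner (T u) u]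
    refine Finset.sum_congr rfl fun i _ => ?_
    rw [hT.isSymmetric, hb, real_inner_smul_right, real_inner_comm u]
    ring
  have htrace : LinearMap.trace ℝ E T = ∑ i, μ i := by
    rw [T.trace_eq_sum_inner b]
    refine Finset.sum_congr rfl fun i _ => ?_
    rw [hb, real_inner_smul_right, real_inner_self_eq_norm_sq, b.norm_eq_one]
    ring
  rw [hspectral, htrace, Finset.sum_mul]
  refine Finset.sum_le_sum fun i _ => mul_le_mul_of_nonneg_left ?_ (hT.nonneg_eigenvalues rfl i)
  have hcs := abs_real_inner_le_norm (b i) u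
  rw [b.norm_eq_one, one_mul] at hcs
  exact sq_le_sq' (neg_le_of_abs_le hcs) (le_of_abs_le hcs)

theorem ConvexOn.fderiv_fderiv_apply_self_nonneg {F : Type*} [NormedAddCommGroup F]
    [NormedSpace ℝ F] {f : F → ℝ} (hconv : ConvexOn ℝ Set.univ f) (hf : Differentiable ℝ f)
    {x : F} (hf' : DifferentiableAt ℝ (fderiv ℝ f) x) (v : F) :
    0 ≤ fderiv ℝ (fderiv ℝ f) x v v := by
  have hline : ∀ t : ℝ, HasDerivAt (fun t : ℝ => x + t • v) v t := fun t => by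
    simpa using ((hasDerivAt_id t).smul_const v).const_add x
  have hslope : ∀ t : ℝ,
      HasDerivAt (fun t : ℝ => f (x + t • v)) (fderiv ℝ f (x + t • v) v) t :=
    fun t => (hf _).hasFDerivAt.comp_hasDerivAt t (hline t)
  have hconv_line : ConvexOn ℝ Set.univ (fun t : ℝ => f (x + t • v)) := by
    have hcomp : (fun t : ℝ => f (x + t • v)) = f ∘ AffineMap.lineMap x (x + v) := by
      funext t
      simp [AffineMap.lineMap_apply_module', add_comm]
    simpa [hcomp] using hconv.comp_affineMap (AffineMap.lineMap x (x + v))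
  have hmono : Monotone fun t : ℝ => fderiv ℝ f (x + t • v) v := by
    intro s t hst
    have := hconv_line.monotoneOn_deriv (fun t _ => (hslope t).differentiableAt)
      (Set.mem_univ s) (Set.mem_univ t) hst
    rwa [(hslope s).deriv, (hslope t).deriv] at this
  have hsecond : HasDerivAt (fun t : ℝ => fderiv ℝ f (x + t • v) v)
      (fderiv ℝ (fderiv ℝ f) x v v) 0 := by
    have h := hf'.hasFDerivAt.comp_hasDerivAt_of_eq 0 (hline 0) (by simp)
    simpa using h.clm_apply (hasDerivAt_const 0 v)
  simpa [hsecond.deriv] using hmono.deriv_nonneg (x := 0)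

section Gradient

variable {E : Type*} [NormedAddCommGroup E] [InnerProductSpace ℝ E] [CompleteSpace E]

theorem fderiv_gradient (f : E → ℝ) (x : E) :
    fderiv ℝ (gradient f) x =
      (InnerProductSpace.toDual ℝ E).symm.toContinuousLinearEquiv.toContinuousLinearMap.comp
        (fderiv ℝ (fderiv ℝ f) x) :=
  (InnerProductSpace.toDual ℝ E).symm.toContinuousLinearEquiv.comp_fderiv

theorem inner_fderiv_gradient_apply (f : E → ℝ) (x v w : E) :
    ⟪fderiv ℝ (gradient f) x v, w⟫ = fderiv ℝ (fderiv ℝ f) x v w := by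
  simp [fderiv_gradient, InnerProductSpace.toDual_symm_apply]

theorem differentiableAt_gradient {f : E → ℝ} {x : E}
    (hf : DifferentiableAt ℝ (fderiv ℝ f) x) : DifferentiableAt ℝ (gradient f) x :=
  (InnerProductSpace.toDual ℝ E).symm.toContinuousLinearEquiv.differentiableAt.comp x hf

theorem ConvexOn.isPositive_fderiv_gradient {f : E → ℝ} (hconv : ConvexOn ℝ Set.univ f)
    (hf : ContDiff ℝ 2 f) (x : E) : (fderiv ℝ (gradient f) x : E →ₗ[ℝ] E).IsPositive := by
  have hf' : DifferentiableAt ℝ (fderiv ℝ f) x :=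
    (hf.fderiv_right le_rfl).differentiable one_ne_zero x
  refine ⟨fun v w => ?_, fun v => ?_⟩
  · rw [ContinuousLinearMap.coe_coe, inner_fderiv_gradient_apply, real_inner_comm,
      inner_fderiv_gradient_apply]
    exact (hf.contDiffAt.isSymmSndFDerivAt (by simp)) v w
  · simpa [inner_fderiv_gradient_apply] using
      hconv.fderiv_fderiv_apply_self_nonneg (hf.differentiable two_ne_zero) hf' v

end Gradient

section RegularizedField

variable {E : Type*} [NormedAddCommGroup E] [InnerProductSpace ℝ E]
  {G : E → E} {A : E →L[ℝ] E} {x : E} {ε : ℝ}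

theorem HasFDerivAt.rpow_norm_sq_add_smul (hG : HasFDerivAt G A x) (hε : 0 < ε) (q : ℝ) :
    HasFDerivAt (fun y => (‖G y‖ ^ 2 + ε) ^ q • G y)
      ((‖G x‖ ^ 2 + ε) ^ q • A +
        ((q * (‖G x‖ ^ 2 + ε) ^ (q - 1)) • (2 • (innerSL ℝ (G x)).comp A)).smulRight (G x)) x :=
  ((hG.norm_sq.add_const ε).rpow_const (Or.inl (by positivity))).smul hG

theorem trace_fderiv_rpow_norm_sq_add_smul [FiniteDimensional ℝ E] (hG : HasFDerivAt G A x)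
    (hε : 0 < ε) (q : ℝ) :
    LinearMap.trace ℝ E (fderiv ℝ (fun y => (‖G y‖ ^ 2 + ε) ^ q • G y) x) =
      (‖G x‖ ^ 2 + ε) ^ q * LinearMap.trace ℝ E A
        + 2 * q * (‖G x‖ ^ 2 + ε) ^ (q - 1) * ⟪G x, A (G x)⟫ := by
  rw [(hG.rpow_norm_sq_add_smul hε q).fderiv]
  simp only [ContinuousLinearMap.toLinearMap_add, ContinuousLinearMap.toLinearMap_smul,
    ContinuousLinearMap.coe_smulRight, ContinuousLinearMap.toLinearMap_comp,
    ContinuousLinearMap.toLinearMap_innerSL_apply, map_add, map_smul, smul_eq_mul,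
    LinearMap.trace_smulRight, LinearMap.smul_apply, LinearMap.coe_comp, coe_innerₛₗ_apply,
    ContinuousLinearMap.coe_coe, Function.comp_apply, nsmul_eq_mul, Nat.cast_ofNat]
  ring

theorem trace_fderiv_rpow_norm_sq_add_smul_nonneg [FiniteDimensional ℝ E]
    (hG : HasFDerivAt G A x) (hA : (A : E →ₗ[ℝ] E).IsPositive) {p : ℝ} (hp : 1 ≤ p)
    (hε : 0 < ε) :
    0 ≤ LinearMap.trace ℝ E (fderiv ℝ (fun y => (‖G y‖ ^ 2 + ε) ^ ((p - 2) / 2) • G y) x) := by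
  set s := ‖G x‖ ^ 2 + ε
  set T := LinearMap.trace ℝ E A
  set a := ⟪A (G x), G x⟫
  have hs_pos : 0 < s := by positivity
  have hfactor : s ^ ((p - 2) / 2) * T + 2 * ((p - 2) / 2) * s ^ ((p - 2) / 2 - 1) * a
      = s ^ ((p - 2) / 2 - 1) * (ε * T + (‖G x‖ ^ 2 * T - a) + (p - 1) * a) := by
    rw [Real.rpow_sub_one hs_pos.ne']
    field_simp
    ring
  rw [trace_fderiv_rpow_norm_sq_add_smul hG hε, real_inner_comm, hfactor]
  have hquad : a ≤ T * ‖G x‖ ^ 2 := hA.inner_map_self_le_trace_mul_norm_sq (G x)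
  have hεT : 0 ≤ ε * T := mul_nonneg hε.le hA.trace_nonneg
  have ha : 0 ≤ (p - 1) * a := mul_nonneg (by linarith) (hA.inner_nonneg_left (G x))
  exact mul_nonneg (Real.rpow_nonneg hs_pos.le _) (by linarith)

end RegularizedField

theorem sum_inner_apply_single_eq_trace {ι : Type*} [Fintype ι] [DecidableEq ι]
    (T : EuclideanSpace ℝ ι →L[ℝ] EuclideanSpace ℝ ι) :
    ∑ i, ⟪T (EuclideanSpace.single i 1), EuclideanSpace.single i 1⟫ =
      LinearMap.trace ℝ (EuclideanSpace ℝ ι) T := by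
  rw [LinearMap.trace_eq_sum_inner _ (EuclideanSpace.basisFun ι ℝ)]
  simp [real_inner_comm]

theorem convex_C2_regularized_div_nonneg_general
    (n : ℕ) (p : ℝ) (hp : 1 ≤ p) (ε : ℝ) (hε : 0 < ε)
    (f : EuclideanSpace ℝ (Fin n) → ℝ)
    (hf : ContDiff ℝ 2 f)
    (hconv : ConvexOn ℝ Set.univ f)
    (V : EuclideanSpace ℝ (Fin n) → EuclideanSpace ℝ (Fin n))
    (hV : V = fun x => (‖gradient f x‖ ^ 2 + ε) ^ ((p - 2) / 2) • gradient f x)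
    (x : EuclideanSpace ℝ (Fin n)) :
    0 ≤ ∑ i : Fin n,
        ⟪fderiv ℝ V x (EuclideanSpace.single i 1), EuclideanSpace.single i 1⟫ := by
  have hgrad : DifferentiableAt ℝ (gradient f) x :=
    differentiableAt_gradient ((hf.fderiv_right le_rfl).differentiable one_ne_zero x)
  rw [sum_inner_apply_single_eq_trace, hV]
  exact trace_fderiv_rpow_norm_sq_add_smul_nonneg hgrad.hasFDerivAt
    (hconv.isPositive_fderiv_gradient hf x) hp hε

/-- inequality (1.7) of the paper, with `ε = 1/j`, Euclidean case.
Let `p ≥ 1`, `ε > 0`, and let `f : ℝⁿ → ℝ` be a `C²` convex function.  Then the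
regularized vector field `V_ε = (‖∇f‖² + ε)^((p-2)/2) ∇f` has nonnegative
divergence at every point. -/
theorem convex_C2_regularized_div_nonneg
    (n : ℕ) (hn : 1 ≤ n) (p : ℝ) (hp : 1 ≤ p) (ε : ℝ) (hε : 0 < ε)
    (f : EuclideanSpace ℝ (Fin n) → ℝ)
    (hf : ContDiff ℝ 2 f)
    (hconv : ConvexOn ℝ Set.univ f)
    (V : EuclideanSpace ℝ (Fin n) → EuclideanSpace ℝ (Fin n))
    (hV : V = fun x => (‖gradient f x‖ ^ 2 + ε) ^ ((p - 2) / 2) • gradient f x)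
    (x : EuclideanSpace ℝ (Fin n)) :
    0 ≤ ∑ i : Fin n,
        ⟪fderiv ℝ V x (EuclideanSpace.single i 1), EuclideanSpace.single i 1⟫ :=
  convex_C2_regularized_div_nonneg_general n p hp ε hε f hf hconv V hV x
end

section
/- Let n ≥ 1, p ≥ 1, and ε > 0. Let f : ℝⁿ → ℝ be a C² convex function. Then for every nonnegative smooth compactly supported φ : ℝⁿ → ℝ, ∫_{ℝⁿ} (‖∇f(x)‖² + ε)^{(p-2)/2} ⟨∇f(x), ∇φ(x)⟩ dx ≤ 0. (Inequality (1.8) of the paper, with ε = 1/j, in the Euclidean case.) -/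
open scoped RealInnerProductSpace Topology
open MeasureTheory Filter Metric Real

section aux
variable {E : Type*} [NormedAddCommGroup E] [InnerProductSpace ℝ E] [FiniteDimensional ℝ E]
variable {f : E → ℝ}

lemma deriv_nonneg_of_monotone' {m : ℝ → ℝ} (hm : Monotone m) {c x : ℝ}
    (h : HasDerivAt m c x) : 0 ≤ c := by
  have h2 : Tendsto (slope m x) (𝓝[>] x) (𝓝 c) :=
    (hasDerivAt_iff_tendsto_slope.1 h).mono_left
      (nhdsWithin_mono _ fun y hy => ne_of_gt hy)
  refine ge_of_tendsto h2 ?_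
  filter_upwards [self_mem_nhdsWithin] with y hy
  have h3 : m x ≤ m y := hm (le_of_lt hy)
  simp only [slope_def_field]
  have h4 : (0:ℝ) < y - x := by simp only [Set.mem_Ioi] at hy; linarith
  exact div_nonneg (by linarith) h4.le

omit [FiniteDimensional ℝ E] in
lemma trace_indep {ι κ : Type*} [Fintype ι] [Fintype κ]
    (b : OrthonormalBasis ι ℝ E) (c : OrthonormalBasis κ ℝ E)
    (T : E →L[ℝ] E) (hT : ∀ u w, ⟪T u, w⟫ = ⟪T w, u⟫) :
    ∑ i, ⟪T (b i), b i⟫ = ∑ j, ⟪T (c j), c j⟫ := by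
  calc ∑ i, ⟪T (b i), b i⟫ = ∑ i, ∑ j, ⟪T (b i), c j⟫ * ⟪c j, b i⟫ :=
        Finset.sum_congr rfl fun i _ => (c.sum_inner_mul_inner _ _).symm
    _ = ∑ j, ∑ i, ⟪T (c j), b i⟫ * ⟪b i, c j⟫ := by
        rw [Finset.sum_comm]
        refine Finset.sum_congr rfl fun j _ => Finset.sum_congr rfl fun i _ => ?_
        rw [hT (b i) (c j), real_inner_comm (c j) (b i)]
    _ = ∑ j, ⟪T (c j), c j⟫ :=
        Finset.sum_congr rfl fun j _ => b.sum_inner_mul_inner _ _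

lemma psd_trace_bound {ι : Type*} [Fintype ι]
    (b : OrthonormalBasis ι ℝ E) (T : E →L[ℝ] E)
    (hT : ∀ u w, ⟪T u, w⟫ = ⟪T w, u⟫) (hpos : ∀ u, 0 ≤ ⟪T u, u⟫) (v : E) :
    ⟪T v, v⟫ ≤ ‖v‖ ^ 2 * ∑ i, ⟪T (b i), b i⟫ := by
  classical
  have htr : 0 ≤ ∑ i, ⟪T (b i), b i⟫ := Finset.sum_nonneg fun i _ => hpos (b i)
  rcases eq_or_ne v 0 with rfl | hv
  · simpa using mul_nonneg (sq_nonneg (0:ℝ)) htr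
  · set u : E := ‖v‖⁻¹ • v with hu_def
    have hnv : ‖v‖ ≠ 0 := norm_ne_zero_iff.2 hv
    have hun : ‖u‖ = 1 := by
      rw [hu_def, norm_smul]; simp [abs_of_nonneg, inv_mul_cancel₀ hnv, norm_nonneg]
    have hortho : Orthonormal ℝ ((↑) : ({u} : Set E) → E) := by
      rw [orthonormal_subtype_iff_ite]
      intro x hx y hy
      simp only [Set.mem_singleton_iff] at hx hy
      subst hx; subst hy
      simp [real_inner_self_eq_norm_sq, hun]
    obtain ⟨s, c, hsub, hc⟩ := hortho.exists_orthonormalBasis_extension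
    have hmem : u ∈ s := hsub rfl
    have h1 : ⟪T u, u⟫ ≤ ∑ j, ⟪T (c j), c j⟫ := by
      have h2 : ⟪T (c ⟨u, hmem⟩), c ⟨u, hmem⟩⟫ = ⟪T u, u⟫ := by rw [hc]
      calc ⟪T u, u⟫ = ⟪T (c ⟨u, hmem⟩), c ⟨u, hmem⟩⟫ := h2.symm
        _ ≤ ∑ j, ⟪T (c j), c j⟫ :=
          Finset.single_le_sum (f := fun j => ⟪T (c j), c j⟫) (fun j _ => hpos (c j))
            (Finset.mem_univ _)
    have h3 : ⟪T u, u⟫ = (‖v‖^2)⁻¹ * ⟪T v, v⟫ := by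
      rw [hu_def, ContinuousLinearMap.map_smul]
      rw [real_inner_smul_left, real_inner_smul_right]
      rw [sq]
      simp [mul_inv]
      ring
    rw [trace_indep c b T hT] at h1
    rw [h3] at h1
    have h4 : ⟪T v, v⟫ = ‖v‖^2 * ((‖v‖^2)⁻¹ * ⟪T v, v⟫) := by
      field_simp
    rw [h4]
    exact mul_le_mul_of_nonneg_left h1 (sq_nonneg _)

lemma gradient_contDiff (hf : ContDiff ℝ 2 f) : ContDiff ℝ 1 (gradient f) :=
  (InnerProductSpace.toDual ℝ E).symm.toContinuousLinearEquiv.contDiff.comp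
    (hf.fderiv_right (by norm_num))

lemma inner_gradient' (x v : E) : ⟪gradient f x, v⟫ = fderiv ℝ f x v :=
  InnerProductSpace.toDual_symm_apply

lemma inner_fderiv_gradient (x u v : E) :
    ⟪fderiv ℝ (gradient f) x u, v⟫ = fderiv ℝ (fderiv ℝ f) x u v := by
  have h : gradient f = (InnerProductSpace.toDual ℝ E).symm ∘ (fderiv ℝ f) := rfl
  rw [h, LinearIsometryEquiv.comp_fderiv]
  simp only [ContinuousLinearMap.coe_comp', Function.comp_apply,
    LinearIsometryEquiv.coe_coe]
  exact InnerProductSpace.toDual_symm_apply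

lemma hess_symm (hf : ContDiff ℝ 2 f) (x u v : E) :
    ⟪fderiv ℝ (gradient f) x u, v⟫ = ⟪fderiv ℝ (gradient f) x v, u⟫ := by
  rw [inner_fderiv_gradient, inner_fderiv_gradient]
  exact second_derivative_symmetric
    (fun y => ((hf.differentiable two_ne_zero) y).hasFDerivAt)
    (((hf.fderiv_right (le_refl _)).differentiable one_ne_zero x).hasFDerivAt) u v

lemma hess_psd (hf : ContDiff ℝ 2 f) (hconv : ConvexOn ℝ Set.univ f) (x v : E) :
    0 ≤ ⟪fderiv ℝ (gradient f) x v, v⟫ := by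
  set F := gradient f with hF
  have hFd : Differentiable ℝ F := (gradient_contDiff hf).differentiable one_ne_zero
  have hfd : Differentiable ℝ f := hf.differentiable two_ne_zero
  set c : ℝ → E := fun t => x + t • v with hc
  have hcd : ∀ t, HasDerivAt c v t := fun t => by
    have := ((hasDerivAt_id t).smul_const v).const_add x
    simp only [one_smul] at this
    exact this
  set h : ℝ → ℝ := f ∘ c with hh
  have hA : ConvexOn ℝ Set.univ h := by
    have := hconv.comp_affineMap (AffineMap.lineMap x (x + v) : ℝ →ᵃ[ℝ] E)
    have heq : (f ∘ (AffineMap.lineMap x (x + v) : ℝ →ᵃ[ℝ] E)) = h := by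
      funext t
      simp [hh, hc, AffineMap.lineMap_apply, add_comm]
    rw [heq] at this
    simpa using this
  set m : ℝ → ℝ := fun t => ⟪F (c t), v⟫ with hm
  have hder : ∀ t, HasDerivAt h (m t) t := fun t => by
    have := ((hfd (c t)).hasFDerivAt).comp_hasDerivAt t (hcd t)
    simpa [hh, hm, hF, inner_gradient'] using this
  have hmono : Monotone m := by
    have h1 : MonotoneOn (deriv h) Set.univ :=
      hA.monotoneOn_deriv (fun y _ => (hder y).differentiableAt)
    have h2 : deriv h = m := funext fun t => (hder t).deriv
    rw [h2] at h1
    exact monotoneOn_univ.1 h1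
  have hTd : HasDerivAt m ⟪fderiv ℝ F x v, v⟫ 0 := by
    have h1 : HasDerivAt (fun t => F (c t)) (fderiv ℝ F x v) 0 := by
      have := (hFd (c 0)).hasFDerivAt.comp_hasDerivAt 0 (hcd 0)
      simpa [hc, Function.comp_def] using this
    have h2 := ((innerSL ℝ (E := E)).flip v).hasFDerivAt.comp_hasDerivAt 0 h1
    exact h2
  exact deriv_nonneg_of_monotone' hmono hTd

end aux

set_option maxHeartbeats 1000000 in
/-- inequality (1.8) of the paper, with `ε = 1/j`, Euclidean case.
Let `p ≥ 1`, `ε > 0`, and let `f : ℝⁿ → ℝ` be a `C²` convex function.  Then for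
every nonnegative smooth compactly supported `φ`,
`∫ (‖∇f‖² + ε)^((p-2)/2) ⟨∇f, ∇φ⟩ ≤ 0`. -/
theorem convex_C2_regularized_weak_inequality
    (n : ℕ) (hn : 1 ≤ n) (p : ℝ) (hp : 1 ≤ p) (ε : ℝ) (hε : 0 < ε)
    (f : EuclideanSpace ℝ (Fin n) → ℝ)
    (hf : ContDiff ℝ 2 f)
    (hconv : ConvexOn ℝ Set.univ f)
    (φ : EuclideanSpace ℝ (Fin n) → ℝ)
    (hφ : ContDiff ℝ (⊤ : ℕ∞) φ) (hφc : HasCompactSupport φ) (hφ0 : ∀ x, 0 ≤ φ x) :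
    (∫ x, (‖gradient f x‖ ^ 2 + ε) ^ ((p - 2) / 2) * ⟪gradient f x, gradient φ x⟫) ≤ 0 := by
  classical
  set F : EuclideanSpace ℝ (Fin n) → EuclideanSpace ℝ (Fin n) := gradient f with hF
  have hF1 : ContDiff ℝ 1 F := gradient_contDiff hf
  have hFd : Differentiable ℝ F := hF1.differentiable one_ne_zero
  have hFc : Continuous F := hF1.continuous
  have hTc : Continuous (fun x => fderiv ℝ F x) := hF1.continuous_fderiv one_ne_zero
  set α : ℝ := (p - 2) / 2 with hα
  set g : EuclideanSpace ℝ (Fin n) → ℝ := fun x => ‖F x‖ ^ 2 + ε with hg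
  have hgpos : ∀ x, 0 < g x := fun x => by
    have : 0 ≤ ‖F x‖ ^ 2 := sq_nonneg _
    simp only [hg]; linarith
  have hgc : Continuous g := by
    simp only [hg]; exact ((hFc.norm).pow 2).add continuous_const
  set w : EuclideanSpace ℝ (Fin n) → ℝ := fun x => g x ^ α with hw
  have hwc : Continuous w := hgc.rpow_const (fun x => Or.inl (hgpos x).ne')
  set b := EuclideanSpace.basisFun (Fin n) ℝ with hb
  set T : EuclideanSpace ℝ (Fin n) → _ := fun x => fderiv ℝ F x with hT
  have hsymm : ∀ x u v, ⟪T x u, v⟫ = ⟪T x v, u⟫ := fun x u v => hess_symm hf x u v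
  have hpsd : ∀ x v, 0 ≤ ⟪T x v, v⟫ := fun x v => hess_psd hf hconv x v
  -- derivatives
  have hgder : ∀ x, HasFDerivAt g (2 • (innerSL ℝ (F x)).comp (T x)) x := fun x =>
    ((hFd x).hasFDerivAt.norm_sq).add_const ε
  set w' : EuclideanSpace ℝ (Fin n) → _ →L[ℝ] ℝ :=
    fun x => (α * g x ^ (α - 1)) • (2 • (innerSL ℝ (F x)).comp (T x)) with hw'
  have hwder : ∀ x, HasFDerivAt w (w' x) x := fun x =>
    (Real.hasDerivAt_rpow_const (p := α) (Or.inl (hgpos x).ne')).comp_hasFDerivAt x (hgder x)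
  set u : Fin n → EuclideanSpace ℝ (Fin n) → ℝ := fun i x => w x * ⟪F x, b i⟫ with hu
  set B : Fin n → EuclideanSpace ℝ (Fin n) →L[ℝ] ℝ :=
    fun i => (innerSL ℝ (E := EuclideanSpace ℝ (Fin n))).flip (b i) with hB
  set u' : Fin n → EuclideanSpace ℝ (Fin n) → EuclideanSpace ℝ (Fin n) →L[ℝ] ℝ :=
    fun i x => w x • ((B i).comp (T x)) + ⟪F x, b i⟫ • w' x with hu'
  have hBapp : ∀ i y, B i y = ⟪y, b i⟫ := fun i y => rfl
  have huder : ∀ i x, HasFDerivAt (u i) (u' i x) x := by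
    intro i x
    have h2 : HasFDerivAt (fun y => ⟪F y, b i⟫) ((B i).comp (T x)) x :=
      (B i).hasFDerivAt.comp x (hFd x).hasFDerivAt
    exact (hwder x).mul h2
  -- pointwise formula for the divergence integrand
  have hu'bi : ∀ i x, u' i x (b i)
      = w x * ⟪T x (b i), b i⟫
        + ⟪F x, b i⟫ * ((α * g x ^ (α - 1)) * (2 * ⟪F x, T x (b i)⟫)) := by
    intro i x
    simp only [hu', ContinuousLinearMap.add_apply, ContinuousLinearMap.coe_smul',
      Pi.smul_apply, ContinuousLinearMap.coe_comp', Function.comp_apply, smul_eq_mul,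
      hw', hBapp, real_inner_comm (T x (b i)) (b i)]
    simp [real_inner_comm]
  set dv : EuclideanSpace ℝ (Fin n) → ℝ := fun x => ∑ i, u' i x (b i) with hdv
  have hdiv_eq : ∀ x, dv x
      = w x * (∑ i, ⟪T x (b i), b i⟫) + (2 * α * g x ^ (α - 1)) * ⟪T x (F x), F x⟫ := by
    intro x
    have h1 : ∀ i : Fin n, u' i x (b i)
        = w x * ⟪T x (b i), b i⟫
          + (2 * α * g x ^ (α - 1)) * (⟪T x (F x), b i⟫ * ⟪b i, F x⟫) := by
      intro i
      rw [hu'bi i x]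
      have hflip : ⟪F x, T x (b i)⟫ = ⟪T x (F x), b i⟫ :=
        (real_inner_comm _ _).trans (hsymm x (b i) (F x))
      rw [hflip, real_inner_comm (b i) (F x)]
      ring
    simp only [hdv, h1]
    rw [Finset.sum_add_distrib, ← Finset.mul_sum, ← Finset.mul_sum,
      OrthonormalBasis.sum_inner_mul_inner]
  have hdiv_nonneg : ∀ x, 0 ≤ dv x := by
    intro x
    rw [hdiv_eq x]
    have htr0 : 0 ≤ ∑ i, ⟪T x (b i), b i⟫ := Finset.sum_nonneg fun i _ => hpsd x (b i)
    have hq0 : 0 ≤ ⟪T x (F x), F x⟫ := hpsd x (F x)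
    have hqle : ⟪T x (F x), F x⟫ ≤ g x * ∑ i, ⟪T x (b i), b i⟫ := by
      have h1 := psd_trace_bound b (T x) (hsymm x) (hpsd x) (F x)
      have h2 : ‖F x‖ ^ 2 * (∑ i, ⟪T x (b i), b i⟫) ≤ g x * ∑ i, ⟪T x (b i), b i⟫ := by
        apply mul_le_mul_of_nonneg_right _ htr0
        simp only [hg]; linarith
      linarith
    have hgx := hgpos x
    have hgpow : (0:ℝ) < g x ^ (α - 1) := Real.rpow_pos_of_pos hgx _
    have hgpowα : (0:ℝ) < g x ^ α := Real.rpow_pos_of_pos hgx _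
    have hkey : g x ^ (α - 1) * g x = g x ^ α := by
      rw [← Real.rpow_add_one hgx.ne' (α - 1)]
      ring_nf
    have hwx : w x = g x ^ α := rfl
    rw [hwx]
    rcases le_or_gt 0 α with hα0 | hα0
    · have h1 : 0 ≤ g x ^ α * ∑ i, ⟪T x (b i), b i⟫ := mul_nonneg hgpowα.le htr0
      have h2 : 0 ≤ 2 * α * g x ^ (α - 1) * ⟪T x (F x), F x⟫ :=
        mul_nonneg (mul_nonneg (by linarith) hgpow.le) hq0
      linarith
    · have hc0 : 2 * α * g x ^ (α - 1) < 0 :=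
        mul_neg_of_neg_of_pos (by linarith) hgpow
      have h2 : 2 * α * g x ^ (α - 1) * ⟪T x (F x), F x⟫
          ≥ 2 * α * g x ^ (α - 1) * (g x * ∑ i, ⟪T x (b i), b i⟫) :=
        mul_le_mul_of_nonpos_left hqle hc0.le
      have h3 : 2 * α * g x ^ (α - 1) * (g x * ∑ i, ⟪T x (b i), b i⟫)
          = 2 * α * (g x ^ α * ∑ i, ⟪T x (b i), b i⟫) := by
        rw [← hkey]; ring
      have h4 : 0 ≤ (1 + 2 * α) * (g x ^ α * ∑ i, ⟪T x (b i), b i⟫) := by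
        have h5 : 0 ≤ 1 + 2 * α := by rw [hα]; linarith
        exact mul_nonneg h5 (mul_nonneg hgpowα.le htr0)
      nlinarith [h2, h3, h4]
  -- continuity facts
  have hφcont : Continuous φ := hφ.continuous
  have hφd : Differentiable ℝ φ := hφ.differentiable (by simp)
  have hFbc : ∀ i : Fin n, Continuous (fun x => ⟪F x, b i⟫) := fun i =>
    (B i).continuous.comp hFc
  have hui_c : ∀ i, Continuous (u i) := fun i => hwc.mul (hFbc i)
  have hTbc : ∀ v : EuclideanSpace ℝ (Fin n), Continuous (fun x => T x v) := fun v =>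
    (ContinuousLinearMap.apply ℝ _ v).continuous.comp hTc
  have hu'_c : ∀ i, Continuous (fun x => u' i x (b i)) := by
    intro i
    have hc1 : Continuous (fun x => ⟪T x (b i), b i⟫) := (B i).continuous.comp (hTbc (b i))
    have hc2 : Continuous (fun x => ⟪F x, T x (b i)⟫) :=
      Continuous.inner hFc (hTbc (b i))
    have hc3 : Continuous (fun x => g x ^ (α - 1)) :=
      hgc.rpow_const (fun x => Or.inl (hgpos x).ne')
    have hcont : Continuous (fun x => w x * ⟪T x (b i), b i⟫
        + ⟪F x, b i⟫ * ((α * g x ^ (α - 1)) * (2 * ⟪F x, T x (b i)⟫))) :=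
      (hwc.mul hc1).add ((hFbc i).mul ((continuous_const.mul hc3).mul
        (continuous_const.mul hc2)))
    simpa only [← hu'bi] using hcont
  have hφ'c : ∀ v, Continuous (fun x => fderiv ℝ φ x v) := fun v =>
    (ContinuousLinearMap.apply ℝ ℝ v).continuous.comp (hφ.continuous_fderiv (by simp))
  have hφ'supp : ∀ v, HasCompactSupport (fun x => fderiv ℝ φ x v) := fun v =>
    (hφc.fderiv ℝ).comp_left (g := fun L : EuclideanSpace ℝ (Fin n) →L[ℝ] ℝ => L v) rfl
  -- integration by parts in each direction
  have hInt1 : ∀ i : Fin n, Integrable (fun x => u i x * fderiv ℝ φ x (b i)) := fun i =>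
    ((hui_c i).mul (hφ'c (b i))).integrable_of_hasCompactSupport ((hφ'supp (b i)).mul_left)
  have hIBP : ∀ i : Fin n,
      ∫ x, u i x * fderiv ℝ φ x (b i) = - ∫ x, u' i x (b i) * φ x := by
    intro i
    have hud : Differentiable ℝ (u i) := fun x => (huder i x).differentiableAt
    have hfd_eq : (fun x => fderiv ℝ (u i) x (b i)) = fun x => u' i x (b i) := by
      funext x; rw [(huder i x).fderiv]
    have h1 : Integrable (fun x => fderiv ℝ (u i) x (b i) * φ x) := by
      rw [show (fun x => fderiv ℝ (u i) x (b i) * φ x) = fun x => u' i x (b i) * φ x by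
        funext x; rw [(huder i x).fderiv]]
      exact ((hu'_c i).mul hφcont).integrable_of_hasCompactSupport hφc.mul_left
    have h3 : Integrable (fun x => u i x * φ x) :=
      ((hui_c i).mul hφcont).integrable_of_hasCompactSupport hφc.mul_left
    have := integral_mul_fderiv_eq_neg_fderiv_mul_of_integrable h1 (hInt1 i) h3 (fun x _ => hud x) (fun x _ => hφd x)
    rw [this]
    congr 1
    apply integral_congr_ae
    filter_upwards with x
    rw [(huder i x).fderiv]
  -- expand the integrand
  have hexp : ∀ x, w x * ⟪F x, gradient φ x⟫ = ∑ i, u i x * fderiv ℝ φ x (b i) := by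
    intro x
    have h1 : ⟪F x, gradient φ x⟫ = fderiv ℝ φ x (F x) := by
      rw [real_inner_comm]; exact inner_gradient' x (F x)
    have h2 : F x = ∑ i, ⟪b i, F x⟫ • b i := by
      have := b.sum_repr' (F x)
      simp only [hb] at this ⊢
      exact this.symm
    have h3 : fderiv ℝ φ x (F x) = ∑ i, ⟪b i, F x⟫ * fderiv ℝ φ x (b i) := by
      conv_lhs => rw [h2]
      rw [map_sum]
      exact Finset.sum_congr rfl fun i _ => by rw [ContinuousLinearMap.map_smul]; rfl
    rw [h1, h3, Finset.mul_sum]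
    exact Finset.sum_congr rfl fun i _ => by
      rw [real_inner_comm (F x) (b i)]; simp only [hu]; ring
  -- put everything together
  have hIntD : ∀ i : Fin n, Integrable (fun x => u' i x (b i) * φ x) := fun i =>
    ((hu'_c i).mul hφcont).integrable_of_hasCompactSupport hφc.mul_left
  show (∫ x, w x * ⟪F x, gradient φ x⟫) ≤ 0
  calc (∫ x, w x * ⟪F x, gradient φ x⟫)
      = ∫ x, ∑ i, u i x * fderiv ℝ φ x (b i) := by
        apply integral_congr_ae; filter_upwards with x; exact hexp x
    _ = ∑ i, ∫ x, u i x * fderiv ℝ φ x (b i) :=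
        integral_finset_sum _ (fun i _ => hInt1 i)
    _ = ∑ i : Fin n, - ∫ x, u' i x (b i) * φ x :=
        Finset.sum_congr rfl fun i _ => hIBP i
    _ = - ∑ i : Fin n, ∫ x, u' i x (b i) * φ x := by rw [Finset.sum_neg_distrib]
    _ = - ∫ x, ∑ i, u' i x (b i) * φ x := by
        rw [integral_finset_sum _ (fun i _ => hIntD i)]
    _ = - ∫ x, dv x * φ x := by
        congr 1; apply integral_congr_ae; filter_upwards with x
        simp only [hdv, Finset.sum_mul]
    _ ≤ 0 := by
        rw [neg_nonpos]
        exact integral_nonneg fun x => mul_nonneg (hdiv_nonneg x) (hφ0 x)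
end

section
/- Let n ≥ 1, let p be a real number, and let f : ℝⁿ → ℝ be f(x) = e^{‖x‖²}. Then for every x ∈ ℝⁿ with x ≠ 0, writing r = ‖x‖, the divergence of the vector field V(y) = ‖∇f(y)‖^{p-2} ∇f(y) at x equals (n + p − 2 + 2(p−1)r²) · 2^{p−1} · e^{(p−1)r²} · r^{p−2}. (The explicit computation in Counter-Example 3.1.) -/
open scoped RealInnerProductSpace
open Real

/-! `∇f(y) = 2 e^{‖y‖²} y`, so `V` is the radial field `V(y) = φ(‖y‖²) y` with
`φ(t) = 2^{p-1} e^{(p-1)t} t^{(p-2)/2}`. The divergence of a radial field `φ(‖y‖²) y` on `ℝⁿ`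
is `n φ(s) + 2 s φ'(s)` at `s = ‖x‖²`, and here `φ'(s) = φ(s) ((p - 1) + (p - 2) / (2s))`. -/

lemma Real.sq_rpow_div_two {a : ℝ} (ha : 0 ≤ a) (q : ℝ) : (a ^ 2) ^ (q / 2) = a ^ q := by
  rw [← Real.rpow_natCast_mul ha]
  congr 1
  push_cast
  ring

section InnerProductSpace

variable {E : Type*} [NormedAddCommGroup E] [InnerProductSpace ℝ E]

lemma hasGradientAt_exp_norm_sq [CompleteSpace E] (y : E) :
    HasGradientAt (fun x : E => exp (‖x‖ ^ 2)) ((2 * exp (‖y‖ ^ 2)) • y) y := by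
  rw [hasGradientAt_iff_hasFDerivAt]
  refine (hasFDerivAt_id y).norm_sq.exp.congr_fderiv ?_
  ext v
  simp only [ContinuousLinearMap.comp_id, smul_apply, coe_innerSL_apply,
    id_eq, nsmul_eq_mul, Nat.cast_ofNat, smul_eq_mul, map_smul,
    InnerProductSpace.toDual_apply_apply]
  ring

lemma norm_smul_rpow_smul_smul {c : ℝ} (hc : 0 < c) (q : ℝ) (y : E) :
    ‖c • y‖ ^ q • c • y = (c ^ (q + 1) * (‖y‖ ^ 2) ^ (q / 2)) • y := by
  rw [norm_smul, Real.norm_of_nonneg hc.le, Real.mul_rpow hc.le (norm_nonneg y), smul_smul,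
    Real.rpow_add_one hc.ne', Real.sq_rpow_div_two (norm_nonneg y)]
  ring_nf

lemma hasFDerivAt_comp_norm_sq_smul {φ : ℝ → ℝ} {φ' : ℝ} {x : E}
    (hφ : HasDerivAt φ φ' (‖x‖ ^ 2)) :
    HasFDerivAt (fun y : E => φ (‖y‖ ^ 2) • y)
      (φ (‖x‖ ^ 2) • ContinuousLinearMap.id ℝ E + (φ' • 2 • innerSL ℝ x).smulRight x) x := by
  have h := hφ.comp_hasFDerivAt x (hasFDerivAt_id x).norm_sq
  simp only [ContinuousLinearMap.comp_id] at h
  exact h.smul (hasFDerivAt_id x)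

end InnerProductSpace

lemma sum_inner_fderiv_comp_norm_sq_smul {n : ℕ} {φ : ℝ → ℝ} {φ' : ℝ}
    {x : EuclideanSpace ℝ (Fin n)} (hφ : HasDerivAt φ φ' (‖x‖ ^ 2)) :
    ∑ i : Fin n, ⟪fderiv ℝ (fun y => φ (‖y‖ ^ 2) • y) x (EuclideanSpace.single i 1),
        EuclideanSpace.single i 1⟫
      = n * φ (‖x‖ ^ 2) + 2 * ‖x‖ ^ 2 * φ' := by
  rw [(hasFDerivAt_comp_norm_sq_smul hφ).fderiv]
  simp only [add_apply, smul_apply, ContinuousLinearMap.id_apply,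
    ContinuousLinearMap.smulRight_apply, coe_innerSL_apply, EuclideanSpace.inner_single_right,
    inner_add_left, PiLp.smul_apply, PiLp.single_eq_same, ringHom_apply,
    nsmul_eq_mul, Nat.cast_ofNat, smul_eq_mul, one_mul, mul_one,
    Finset.sum_add_distrib, Finset.sum_const, Finset.card_univ, Fintype.card_fin, add_right_inj]
  rw [EuclideanSpace.norm_sq_eq, Finset.mul_sum, Finset.sum_mul]
  refine Finset.sum_congr rfl fun i _ => ?_
  rw [Real.norm_eq_abs, sq_abs]
  ring

lemma hasDerivAt_exp_mul_mul_rpow (a b : ℝ) {t : ℝ} (ht : 0 < t) :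
    HasDerivAt (fun s => exp (a * s) * s ^ b) (exp (a * t) * t ^ b * (a + b / t)) t := by
  have hexp : HasDerivAt (fun s => exp (a * s)) (exp (a * t) * a) t :=
    ((hasDerivAt_id t).const_mul a).exp.congr_deriv (by simp)
  refine (hexp.mul (Real.hasDerivAt_rpow_const (p := b) (Or.inl ht.ne'))).congr_deriv ?_
  rw [Real.rpow_sub_one ht.ne']
  ring

theorem divergence_of_pLaplace_field_of_exp_norm_sq_general
    (n : ℕ) (p : ℝ)
    (f : EuclideanSpace ℝ (Fin n) → ℝ)
    (hf : f = fun x => Real.exp (‖x‖ ^ 2))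
    (V : EuclideanSpace ℝ (Fin n) → EuclideanSpace ℝ (Fin n))
    (hV : V = fun y => ‖gradient f y‖ ^ (p - 2) • gradient f y)
    (x : EuclideanSpace ℝ (Fin n)) (hx : x ≠ 0) :
    ∑ i : Fin n,
        ⟪fderiv ℝ V x (EuclideanSpace.single i 1), EuclideanSpace.single i 1⟫
      = ((n : ℝ) + p - 2 + 2 * (p - 1) * ‖x‖ ^ 2) * 2 ^ (p - 1) *
          Real.exp ((p - 1) * ‖x‖ ^ 2) * ‖x‖ ^ (p - 2) := by
  set φ : ℝ → ℝ := fun t => 2 ^ (p - 1) * (exp ((p - 1) * t) * t ^ ((p - 2) / 2))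
  have hgrad : gradient f = fun y => (2 * exp (‖y‖ ^ 2)) • y := by
    funext y
    rw [hf]
    exact (hasGradientAt_exp_norm_sq y).gradient
  have hV_radial : V = fun y => φ (‖y‖ ^ 2) • y := by
    funext y
    rw [hV, hgrad]
    dsimp only
    rw [norm_smul_rpow_smul_smul (by positivity), Real.mul_rpow zero_le_two
      (exp_pos _).le, ← Real.exp_mul]
    simp only [φ]
    ring_nf
  have hs : 0 < ‖x‖ ^ 2 := by positivity
  rw [hV_radial, sum_inner_fderiv_comp_norm_sq_smul
    ((hasDerivAt_exp_mul_mul_rpow (p - 1) ((p - 2) / 2) hs).const_mul (2 ^ (p - 1)))]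
  simp only [Real.sq_rpow_div_two (norm_nonneg x)]
  field_simp
  ring

/-- the explicit computation in Counter-Example 3.1.
For `f(x) = e^{‖x‖²}` on `ℝⁿ` and `V = ‖∇f‖^(p-2) ∇f`, at every `x ≠ 0` with
`r = ‖x‖` the divergence of `V` (the trace of its Fréchet derivative) equals
`(n + p − 2 + 2(p−1)r²) · 2^(p−1) · e^{(p−1)r²} · r^(p−2)`. -/
theorem divergence_of_pLaplace_field_of_exp_norm_sq
    (n : ℕ) (hn : 1 ≤ n) (p : ℝ)
    (f : EuclideanSpace ℝ (Fin n) → ℝ)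
    (hf : f = fun x => Real.exp (‖x‖ ^ 2))
    (V : EuclideanSpace ℝ (Fin n) → EuclideanSpace ℝ (Fin n))
    (hV : V = fun y => ‖gradient f y‖ ^ (p - 2) • gradient f y)
    (x : EuclideanSpace ℝ (Fin n)) (hx : x ≠ 0) :
    ∑ i : Fin n,
        ⟪fderiv ℝ V x (EuclideanSpace.single i 1), EuclideanSpace.single i 1⟫
      = ((n : ℝ) + p - 2 + 2 * (p - 1) * ‖x‖ ^ 2) * 2 ^ (p - 1) *
          Real.exp ((p - 1) * ‖x‖ ^ 2) * ‖x‖ ^ (p - 2) :=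
  divergence_of_pLaplace_field_of_exp_norm_sq_general n p f hf V hV x hx
end

section
/- Let n ≥ 1 and let p ≥ 1 be a real number. Let f : ℝⁿ → ℝ be f(x) = e^{‖x‖²} and V(y) = ‖∇f(y)‖^{p-2} ∇f(y). Then for every x ≠ 0, the divergence of V at x is nonnegative: div V(x) ≥ 0. (The remark concluding Section 3: e^{‖x‖²} is p-subharmonic on ℝⁿ for every p ≥ 1.) -/
open scoped RealInnerProductSpace
open MeasureTheory Filter Metric Real

lemma aux_ineq_exp_subharmonic (N p r e w a : ℝ) (hN : 1 ≤ N) (hp : 1 ≤ p) (hr : 0 < r)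
    (he : 0 < e) (hw : 0 ≤ w) (ha : a = r ^ 2) :
    0 ≤ N * (w * (2 * e * r) * (2 * e)) +
      2 * ((2 * e * r + 2 * e * (1 / (2 * r))) * (p - 2) * w * (2 * e)
        + w * (2 * e * r) * (2 * e)) * a := by
  subst ha
  have key : N * (w * (2 * e * r) * (2 * e)) +
      2 * ((2 * e * r + 2 * e * (1 / (2 * r))) * (p - 2) * w * (2 * e)
        + w * (2 * e * r) * (2 * e)) * r ^ 2
      = (4 * e ^ 2 * w * r) * (N + p - 2 + 2 * r ^ 2 * (p - 1)) := by
    field_simp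
    ring
  rw [key]
  have h1 : 0 ≤ N + p - 2 + 2 * r ^ 2 * (p - 1) := by nlinarith
  have h2 : (0:ℝ) ≤ 4 * e ^ 2 * w * r := by
    have := mul_nonneg (mul_nonneg (by positivity : (0:ℝ) ≤ 4 * e ^ 2) hw) hr.le
    linarith
  exact mul_nonneg h2 h1

/-- remark concluding Section 3.  Let `p ≥ 1`,
`f(x) = e^{‖x‖²}` on `ℝⁿ` and `V = ‖∇f‖^(p-2) ∇f`.  Then the divergence of `V`
(trace of its Fréchet derivative) is nonnegative at every `x ≠ 0`; i.e.
`e^{‖x‖²}` is `p`-subharmonic for every `p ≥ 1`. -/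
theorem exp_norm_sq_p_subharmonic_for_p_ge_one
    (n : ℕ) (hn : 1 ≤ n) (p : ℝ) (hp : 1 ≤ p)
    (f : EuclideanSpace ℝ (Fin n) → ℝ)
    (hf : f = fun x => Real.exp (‖x‖ ^ 2))
    (V : EuclideanSpace ℝ (Fin n) → EuclideanSpace ℝ (Fin n))
    (hV : V = fun y => ‖gradient f y‖ ^ (p - 2) • gradient f y)
    (x : EuclideanSpace ℝ (Fin n)) (hx : x ≠ 0) :
    0 ≤ ∑ i : Fin n,
        ⟪fderiv ℝ V x (EuclideanSpace.single i 1), EuclideanSpace.single i 1⟫ := by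
  have hn' : (1:ℝ) ≤ n := by exact_mod_cast hn
  have hrpos : 0 < ‖x‖ := norm_pos_iff.mpr hx
  set r : ℝ := ‖x‖ with hr
  set a : ℝ := ‖x‖ ^ 2 with ha
  have hapos : 0 < a := by positivity
  have ha' : a = r ^ 2 := rfl
  have hsq : Real.sqrt a = r := Real.sqrt_sq (norm_nonneg x)
  -- gradient formula
  have hgrad : ∀ y : EuclideanSpace ℝ (Fin n),
      gradient f y = (2 * Real.exp (‖y‖ ^ 2)) • y := by
    intro y
    have h1 : HasFDerivAt f (Real.exp (‖y‖ ^ 2) • ((2:ℕ) • (innerSL ℝ y))) y := by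
      rw [hf]
      exact HasFDerivAt.exp ((hasStrictFDerivAt_norm_sq y).hasFDerivAt)
    have h2 : (InnerProductSpace.toDual ℝ (EuclideanSpace ℝ (Fin n)))
        ((2 * Real.exp (‖y‖ ^ 2)) • y) = Real.exp (‖y‖ ^ 2) • ((2:ℕ) • (innerSL ℝ y)) := by
      ext v
      simp [real_inner_smul_left]
      ring
    have h3 : HasGradientAt f ((2 * Real.exp (‖y‖ ^ 2)) • y) y := by
      rw [hasGradientAt_iff_hasFDerivAt, h2]; exact h1
    exact h3.gradient
  -- rewrite V
  set c : EuclideanSpace ℝ (Fin n) → ℝ :=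
    fun y => (2 * Real.exp (‖y‖ ^ 2) * ‖y‖) ^ (p - 2) * (2 * Real.exp (‖y‖ ^ 2)) with hc
  have hVW : V = fun y => c y • y := by
    rw [hV]
    funext y
    rw [hgrad y]
    have h3 : ‖(2 * Real.exp (‖y‖ ^ 2)) • y‖ = 2 * Real.exp (‖y‖ ^ 2) * ‖y‖ := by
      rw [norm_smul, Real.norm_eq_abs, abs_of_pos (by positivity)]
    rw [h3, smul_smul]
  -- derivative of the scalar profile
  set u : ℝ := 2 * Real.exp a * Real.sqrt a with hu
  have hupos : 0 < u := by rw [hu, hsq]; positivity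
  set u' : ℝ := 2 * Real.exp a * Real.sqrt a + 2 * Real.exp a * (1 / (2 * Real.sqrt a)) with hu'
  have hud : HasDerivAt (fun s => 2 * Real.exp s * Real.sqrt s) u' a :=
    ((Real.hasDerivAt_exp a).const_mul 2).mul (Real.hasDerivAt_sqrt hapos.ne')
  set Q : ℝ := (u' * (p - 2) * u ^ (p - 2 - 1)) * (2 * Real.exp a)
      + u ^ (p - 2) * (2 * Real.exp a) with hQ
  have hqd : HasDerivAt
      (fun s => (2 * Real.exp s * Real.sqrt s) ^ (p - 2) * (2 * Real.exp s)) Q a :=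
    (hud.rpow_const (Or.inl hupos.ne')).mul ((Real.hasDerivAt_exp a).const_mul 2)
  have hcd : HasFDerivAt c (Q • ((2:ℕ) • (innerSL ℝ x))) x := by
    have hce : c = (fun s => (2 * Real.exp s * Real.sqrt s) ^ (p - 2) * (2 * Real.exp s))
        ∘ (fun y : EuclideanSpace ℝ (Fin n) => ‖y‖ ^ 2) := by
      funext y
      simp [hc, Real.sqrt_sq (norm_nonneg y)]
    rw [hce]
    exact hqd.comp_hasFDerivAt x (hasStrictFDerivAt_norm_sq x).hasFDerivAt
  have hWd : HasFDerivAt (fun y => c y • y)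
      (c x • ContinuousLinearMap.id ℝ (EuclideanSpace ℝ (Fin n))
        + (Q • ((2:ℕ) • (innerSL ℝ x))).smulRight x) x :=
    hcd.smul (hasFDerivAt_id x)
  have hfd : fderiv ℝ V x
      = c x • ContinuousLinearMap.id ℝ (EuclideanSpace ℝ (Fin n))
        + (Q • ((2:ℕ) • (innerSL ℝ x))).smulRight x := by
    rw [hVW]; exact hWd.fderiv
  -- compute each diagonal entry
  have hterm : ∀ i : Fin n,
      ⟪(c x • ContinuousLinearMap.id ℝ (EuclideanSpace ℝ (Fin n))
        + (Q • ((2:ℕ) • (innerSL ℝ x))).smulRight x) (EuclideanSpace.single i 1),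
        EuclideanSpace.single i 1⟫ = c x + 2 * Q * (x i * x i) := by
    intro i
    simp [inner_add_left, real_inner_smul_left, EuclideanSpace.inner_single_right,
      EuclideanSpace.single_apply]
    ring
  have hsum : ∑ i, x i * x i = a := by
    rw [ha, ← real_inner_self_eq_norm_sq x, PiLp.inner_apply]
    rfl
  have hgoal : ∑ i : Fin n,
      ⟪fderiv ℝ V x (EuclideanSpace.single i 1), EuclideanSpace.single i 1⟫
      = n * c x + 2 * Q * a := by
    rw [hfd]
    rw [Finset.sum_congr rfl (fun i _ => hterm i)]
    rw [Finset.sum_add_distrib, Finset.sum_const, ← Finset.mul_sum, hsum]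
    simp [mul_comm]
  rw [hgoal]
  have hup3 : u ^ (p - 2 - 1) = u ^ (p - 3) := by rw [show p - 2 - 1 = p - 3 by ring]
  have hup2 : u ^ (p - 2) = u ^ (p - 3) * u := by
    rw [show p - 2 = p - 3 + 1 by ring, Real.rpow_add_one hupos.ne']
  have hw : (0:ℝ) < u ^ (p - 3) := Real.rpow_pos_of_pos hupos _
  have hQe : Q = (2 * Real.exp a * r + 2 * Real.exp a * (1 / (2 * r))) * (p - 2)
        * u ^ (p - 3) * (2 * Real.exp a)
      + u ^ (p - 3) * (2 * Real.exp a * r) * (2 * Real.exp a) := by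
    rw [hQ, hup3, hup2, hu', hu, hsq]
  have hcxe : c x = u ^ (p - 3) * (2 * Real.exp a * r) * (2 * Real.exp a) := by
    have hc1 : c x = u ^ (p - 2) * (2 * Real.exp a) := by
      simp only [hc]
      rw [← ha, ← hr, hu, hsq]
    rw [hc1, hup2, hu, hsq]
  rw [hQe, hcxe]
  exact aux_ineq_exp_subharmonic n p r (Real.exp a) (u ^ (p - 3)) a hn' hp hrpos
    (Real.exp_pos a) hw.le ha'
end

section
/- Let n ≥ 1, 1 < p < ∞, and q > p − 1. Let f : ℝⁿ → ℝ be a nonnegative C² convex function which has p-finite growth with exponent q, i.e. liminf_{r→∞} r^{−p} ∫_{B(0,r)} f(x)^q dx < ∞. Then f is constant. (Theorem 5.1, Liouville Type Theorem for Convex Functions, in the Euclidean case — ℝⁿ being a complete noncompact Riemannian manifold.) -/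
/-!
A nonconstant convex function grows at least linearly on a cone: if `f ≥ f a + δ` on `B(b, ε)`,
then convexity along the rays from `a` gives `f ≥ f a + tδ` on the dilated ball
`B(a + t(b - a), tε)`. For `f ≥ 0` this puts a ball of radius `≍ r` inside `B(0, r)` on which
`f ≳ r`, so `∫_{B(0,r)} f^q ≳ r^(q+n)`. Since `q + n > p`, this contradicts `p`-finite growth.
-/

open MeasureTheory Filter Metric Real Set Module

theorem Continuous.exists_ball_add_le_of_lt {X : Type*} [PseudoMetricSpace X] {f : X → ℝ}
    (hf : Continuous f) {a b : X} (h : f a < f b) :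
    ∃ ε > 0, ∃ δ > 0, ∀ z ∈ ball b ε, f a + δ ≤ f z := by
  have hb : f a + (f b - f a) / 2 < f b := by linarith
  obtain ⟨ε, hε, hball⟩ := Metric.eventually_nhds_iff.mp
    (hf.continuousAt.eventually (lt_mem_nhds hb))
  exact ⟨ε, hε, (f b - f a) / 2, by linarith, fun z hz => (hball hz).le⟩

section Growth

variable {E : Type*} [NormedAddCommGroup E] [NormedSpace ℝ E] {f : E → ℝ}

theorem ConvexOn.add_mul_le_of_mem_ball (hf : ConvexOn ℝ univ f) {a b w : E} {ε δ t : ℝ}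
    (hab : ∀ z ∈ ball b ε, f a + δ ≤ f z) (ht : 1 ≤ t)
    (hw : w ∈ ball (a + t • (b - a)) (t * ε)) : f a + t * δ ≤ f w := by
  have ht0 : 0 < t := one_pos.trans_le ht
  set z := a + t⁻¹ • (w - a)
  have hz : z ∈ ball b ε := by
    have hzb : z - b = t⁻¹ • (w - (a + t • (b - a))) := by
      match_scalars <;> field_simp
      ring
    rw [mem_ball, dist_eq_norm, hzb, norm_smul, norm_inv, norm_of_nonneg ht0.le,
      inv_mul_lt_iff₀ ht0, ← dist_eq_norm]
    exact hw
  have hconv : f z ≤ (1 - t⁻¹) * f a + t⁻¹ * f w := by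
    have hcomb : (1 - t⁻¹) • a + t⁻¹ • w = z := by module
    simpa only [hcomb, smul_eq_mul] using hf.2 (mem_univ a) (mem_univ w)
      (sub_nonneg.mpr (inv_le_one_of_one_le₀ ht)) (inv_nonneg.mpr ht0.le) (by ring)
  have hscaled : t * f z ≤ (t - 1) * f a + f w := by
    calc t * f z ≤ t * ((1 - t⁻¹) * f a + t⁻¹ * f w) := by gcongr
      _ = (t - 1) * f a + f w := by field_simp
  nlinarith [hab z hz]

theorem ConvexOn.exists_ball_subset_ball_mul_le (hf : ConvexOn ℝ univ f) (hcont : Continuous f)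
    (hf0 : ∀ x, 0 ≤ f x) {a b : E} (hab : f a < f b) :
    ∃ κ > 0, ∃ R, ∀ r ≥ R, ∃ c, ball c (κ * r) ⊆ ball 0 r ∧ ∀ w ∈ ball c (κ * r), κ * r ≤ f w := by
  obtain ⟨ε, hε, δ, hδ, hball⟩ := hcont.exists_ball_add_le_of_lt hab
  set M := ‖b - a‖ + ε
  have hM : 0 < M := by positivity
  refine ⟨min ε δ / (2 * M), by positivity, 2 * (M + ‖a‖), fun r hr => ?_⟩
  set t := r / (2 * M)
  have ht : 1 ≤ t := by
    rw [le_div_iff₀ (by positivity)]; nlinarith [norm_nonneg a]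
  have hκt : min ε δ / (2 * M) * r = t * min ε δ := by ring
  have hsub : ball (a + t • (b - a)) (min ε δ / (2 * M) * r) ⊆ ball (a + t • (b - a)) (t * ε) :=
    ball_subset_ball (by rw [hκt]; gcongr; exact min_le_left ε δ)
  refine ⟨a + t • (b - a), hsub.trans fun w hw => ?_, fun w hw => ?_⟩
  · have ht0 : 0 < t := one_pos.trans_le ht
    have htM : t * M = r / 2 := by simp only [t]; field_simp
    rw [mem_ball_zero_iff]
    calc ‖w‖ = ‖(w - (a + t • (b - a))) + a + t • (b - a)‖ := by congr 1; abel
      _ ≤ ‖w - (a + t • (b - a))‖ + ‖a‖ + ‖t • (b - a)‖ := norm_add₃_le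
      _ = ‖w - (a + t • (b - a))‖ + ‖a‖ + t * ‖b - a‖ := by
          rw [norm_smul, norm_of_nonneg ht0.le]
      _ < t * ε + ‖a‖ + t * ‖b - a‖ := by gcongr; exact mem_ball_iff_norm.mp hw
      _ ≤ r := by nlinarith [norm_nonneg a]
  · calc min ε δ / (2 * M) * r ≤ t * δ := by rw [hκt]; gcongr; exact min_le_right ε δ
      _ ≤ f a + t * δ := le_add_of_nonneg_left (hf0 a)
      _ ≤ f w := hf.add_mul_le_of_mem_ball hball ht (hsub hw)

theorem ConvexOn.eventually_mul_rpow_le_setIntegral_rpow [FiniteDimensional ℝ E]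
    [MeasurableSpace E] [BorelSpace E] (μ : Measure E) [μ.IsAddHaarMeasure]
    (hf : ConvexOn ℝ univ f) (hf0 : ∀ x, 0 ≤ f x) {a b : E} (hab : f a < f b) {q : ℝ}
    (hq : 0 < q) :
    ∃ K > 0, ∀ᶠ r in atTop, K * r ^ (q + finrank ℝ E) ≤ ∫ x in ball 0 r, f x ^ q ∂μ := by
  have hcont : Continuous f := continuousOn_univ.mp (hf.continuousOn isOpen_univ)
  obtain ⟨κ, hκ, R, hR⟩ := hf.exists_ball_subset_ball_mul_le hcont hf0 hab
  have hv : 0 < μ.real (ball 0 1) :=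
    ENNReal.toReal_pos (measure_ball_pos μ 0 one_pos).ne' measure_ball_lt_top.ne
  refine ⟨κ ^ q * κ ^ finrank ℝ E * μ.real (ball 0 1), by positivity, ?_⟩
  filter_upwards [eventually_ge_atTop R, eventually_gt_atTop 0] with r hrR hr
  obtain ⟨c, hsub, hlow⟩ := hR r hrR
  have hint : IntegrableOn (fun x => f x ^ q) (ball 0 r) μ :=
    ((hcont.rpow_const fun _ => Or.inr hq.le).continuousOn.integrableOn_compact
      (isCompact_closedBall 0 r)).mono_set ball_subset_closedBall
  calc κ ^ q * κ ^ finrank ℝ E * μ.real (ball 0 1) * r ^ (q + finrank ℝ E)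
      = (κ * r) ^ q * μ.real (ball c (κ * r)) := by
        rw [measureReal_def μ (ball c _), Measure.addHaar_ball_of_pos μ c (by positivity),
          ENNReal.toReal_mul, ENNReal.toReal_ofReal (by positivity), ← measureReal_def,
          mul_rpow hκ.le hr.le, rpow_add hr, rpow_natCast, mul_pow]
        ring
    _ ≤ ∫ x in ball c (κ * r), f x ^ q ∂μ :=
        setIntegral_ge_of_const_le_real measurableSet_ball measure_ball_lt_top.ne
          (fun x hx => rpow_le_rpow (by positivity) (hlow x hx) hq.le) (hint.mono_set hsub)
    _ ≤ ∫ x in ball 0 r, f x ^ q ∂μ :=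
        setIntegral_mono_set hint (.of_forall fun x => rpow_nonneg (hf0 x) q) hsub.eventuallyLE

end Growth

theorem not_frequently_one_div_rpow_mul_le {I : ℝ → ℝ} {K s p C : ℝ} (hK : 0 < K) (hps : p < s)
    (hI : ∀ᶠ r in atTop, K * r ^ s ≤ I r) : ¬∃ᶠ r in atTop, 1 / r ^ p * I r ≤ C := by
  have hlow : ∀ᶠ r in atTop, K * r ^ (s - p) ≤ 1 / r ^ p * I r := by
    filter_upwards [hI, eventually_gt_atTop 0] with r hr hr0
    rw [rpow_sub hr0, one_div_mul_eq_div, ← mul_div_assoc]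
    gcongr
  have htend : Tendsto (fun r => 1 / r ^ p * I r) atTop atTop :=
    tendsto_atTop_mono' atTop hlow ((tendsto_rpow_atTop (by linarith)).const_mul_atTop hK)
  exact not_frequently.mpr ((htend.eventually_gt_atTop C).mono fun r hr => not_le.mpr hr)

theorem liouville_convex_p_finite_general
    (n : ℕ) (p q : ℝ) (hp : 1 < p) (hq : p - 1 < q)
    (f : EuclideanSpace ℝ (Fin n) → ℝ)
    (hconv : ConvexOn ℝ Set.univ f)
    (hf0 : ∀ x, 0 ≤ f x)
    (hfinite : ∃ C : ℝ, ∃ᶠ r in atTop,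
      (1 / r ^ p) * ∫ x in ball (0 : EuclideanSpace ℝ (Fin n)) r, f x ^ q ≤ C) :
    ∃ c : ℝ, ∀ x, f x = c := by
  by_contra! hnc
  obtain ⟨x, hx⟩ := hnc (f 0)
  obtain ⟨a, b, hab⟩ : ∃ a b, f a < f b := by
    rcases hx.lt_or_gt with h | h
    exacts [⟨x, 0, h⟩, ⟨0, x, h⟩]
  have : Nontrivial (EuclideanSpace ℝ (Fin n)) := nontrivial_of_ne x 0 (ne_of_apply_ne f hx)
  have hdim : (1 : ℝ) ≤ finrank ℝ (EuclideanSpace ℝ (Fin n)) := by exact_mod_cast finrank_pos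
  obtain ⟨K, hK, hgrowth⟩ :=
    hconv.eventually_mul_rpow_le_setIntegral_rpow volume hf0 hab (by linarith : 0 < q)
  obtain ⟨C, hC⟩ := hfinite
  exact not_frequently_one_div_rpow_mul_le hK (by linarith) hgrowth hC

/-- Theorem 5.1, Liouville Type Theorem for Convex Functions,
Euclidean case, with `p`-finite growth.  Let `1 < p`, `q > p − 1`, and let
`f : ℝⁿ → ℝ` be a nonnegative `C²` convex function with `p`-finite growth with
exponent `q`: `liminf_{r→∞} r^{−p} ∫_{B(0,r)} f^q < ∞`, expressed as the
existence of a bound `C` attained along arbitrarily large radii (`∃ᶠ`).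
Then `f` is constant. -/
theorem liouville_convex_p_finite
    (n : ℕ) (hn : 1 ≤ n) (p q : ℝ) (hp : 1 < p) (hq : p - 1 < q)
    (f : EuclideanSpace ℝ (Fin n) → ℝ)
    (hf : ContDiff ℝ 2 f)
    (hconv : ConvexOn ℝ Set.univ f)
    (hf0 : ∀ x, 0 ≤ f x)
    (hfinite : ∃ C : ℝ, ∃ᶠ r in atTop,
      (1 / r ^ p) * ∫ x in ball (0 : EuclideanSpace ℝ (Fin n)) r, f x ^ q ≤ C) :
    ∃ c : ℝ, ∀ x, f x = c :=
  liouville_convex_p_finite_general n p q hp hq f hconv hf0 hfinite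
end

section
/- Let n ≥ 1 and let p > 1 and q satisfy q > p − 1 > 0. Let f : ℝⁿ → ℝ be a nonnegative C² convex function with f ∈ L^q(ℝⁿ), i.e. ∫_{ℝⁿ} f(x)^q dx < ∞. Then f is constant. -/
open MeasureTheory Filter Metric Real Topology

/-- Tangent-line inequality for a convex differentiable function. -/
lemma convex_tangent_le {E : Type*} [NormedAddCommGroup E] [NormedSpace ℝ E]
    {f : E → ℝ} (hconv : ConvexOn ℝ Set.univ f) (hd : Differentiable ℝ f)
    (y z : E) : (fderiv ℝ f y) (z - y) ≤ f z - f y := by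
  set φ : ℝ → ℝ := fun t => f (y + t • (z - y)) with hφ
  have hline : HasDerivAt (fun t : ℝ => y + t • (z - y)) (z - y) 0 := by
    simpa using ((hasDerivAt_id (0:ℝ)).smul_const (z - y)).const_add y
  have hD : HasDerivAt φ ((fderiv ℝ f y) (z - y)) 0 := by
    have h1 : HasFDerivAt f (fderiv ℝ f y) (y + (0:ℝ) • (z - y)) := by
      simpa using (hd (y + (0:ℝ) • (z - y))).hasFDerivAt
    exact h1.comp_hasDerivAt 0 hline
  have htends : Tendsto (slope φ 0) (𝓝[>] 0) (𝓝 ((fderiv ℝ f y) (z - y))) :=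
    (hasDerivAt_iff_tendsto_slope.1 hD).mono_left
      (nhdsWithin_mono 0 (fun t ht => ne_of_gt ht))
  refine le_of_tendsto htends ?_
  filter_upwards [Ioo_mem_nhdsGT_of_mem (Set.left_mem_Ico.2 one_pos)] with t ht
  have ht0 : 0 < t := ht.1
  have hconvineq : f ((1 - t) • y + t • z) ≤ (1 - t) * f y + t * f z :=
    hconv.2 (Set.mem_univ y) (Set.mem_univ z) (by linarith [ht.2]) ht0.le (by ring)
  have heq : y + t • (z - y) = (1 - t) • y + t • z := by
    simp [smul_sub, sub_smul]; abel
  have hφt : φ t ≤ (1 - t) * f y + t * f z := by rw [hφ]; simpa [heq] using hconvineq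
  have hφ0 : φ 0 = f y := by simp [hφ]
  show slope φ 0 t ≤ f z - f y
  have hslope : slope φ 0 t = (φ t - φ 0) / t := by simp [slope_def_field]
  rw [hslope, div_le_iff₀ ht0, hφ0]
  nlinarith [hφt]

/-- Corollary 5.1 in the Euclidean case.  Let `p > 1` and
`q > p − 1 > 0`.  Every nonnegative `C²` convex function `f : ℝⁿ → ℝ` with
`f ∈ L^q(ℝⁿ)` (i.e. `x ↦ f(x)^q` is integrable) is constant. -/
theorem liouville_convex_Lq
    (n : ℕ) (hn : 1 ≤ n) (p q : ℝ) (hp : 0 < p - 1) (hq : p - 1 < q)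
    (f : EuclideanSpace ℝ (Fin n) → ℝ)
    (hf : ContDiff ℝ 2 f)
    (hconv : ConvexOn ℝ Set.univ f)
    (hf0 : ∀ x, 0 ≤ f x)
    (hLq : Integrable (fun x => f x ^ q) (volume : Measure (EuclideanSpace ℝ (Fin n)))) :
    ∃ c : ℝ, ∀ x, f x = c := by
  have hd : Differentiable ℝ f := hf.differentiable (by norm_num)
  by_cases hzero : ∀ x, fderiv ℝ f x = 0
  · exact ⟨f 0, fun x => is_const_of_fderiv_eq_zero hd hzero x 0⟩
  exfalso
  push_neg at hzero
  obtain ⟨y, hL⟩ := hzero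
  set L := fderiv ℝ f y with hLdef
  have hLpos : (0:ℝ) < ‖L‖ := norm_pos_iff.mpr hL
  obtain ⟨v, hv⟩ : ∃ v, L v ≠ 0 := by
    by_contra h; push_neg at h
    exact hL (ContinuousLinearMap.ext fun w => by simp [h w])
  set u := (L v)⁻¹ • v with hu
  have hLu : L u = 1 := by simp [hu, _root_.map_smul, inv_mul_cancel₀ hv]
  set ε := 1 / ‖L‖ with hε
  have hεpos : 0 < ε := by positivity
  have hlow : ∀ (k : ℕ), ∀ z ∈ ball (y + (k:ℝ) • u) ε, (k:ℝ) - 1 ≤ f z := by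
    intro k z hz
    have h1 : L (z - y) ≤ f z - f y := convex_tangent_le hconv hd y z
    have h2 : L (z - y) = (k:ℝ) + L (z - (y + (k:ℝ) • u)) := by
      have hsplit : z - y = (k:ℝ) • u + (z - (y + (k:ℝ) • u)) := by abel
      rw [hsplit, map_add, _root_.map_smul, hLu]; simp
    have h3 : |L (z - (y + (k:ℝ) • u))| ≤ ‖L‖ * ε :=
      calc |L (z - (y + (k:ℝ) • u))| ≤ ‖L‖ * ‖z - (y + (k:ℝ) • u)‖ := L.le_opNorm _
        _ ≤ ‖L‖ * ε :=
          mul_le_mul_of_nonneg_left (le_of_lt (mem_ball_iff_norm.mp hz)) (norm_nonneg _)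
    have h4 : ‖L‖ * ε = 1 := by rw [hε, mul_one_div_cancel hLpos.ne']
    have h5 := hf0 y
    have habs := (abs_le.mp h3).1
    rw [h4] at habs
    linarith [h1, h2]
  have hq0 : 0 < q := lt_trans hp hq
  set V := (volume (ball (0 : EuclideanSpace ℝ (Fin n)) ε)).toReal with hV
  have hVpos : 0 < V :=
    ENNReal.toReal_pos (measure_ball_pos volume 0 hεpos).ne' measure_ball_lt_top.ne
  set C := ∫ x, f x ^ q with hC
  have hCnn : 0 ≤ C := integral_nonneg fun x => Real.rpow_nonneg (hf0 x) q
  have hbound : ∀ k : ℕ, 1 ≤ k → ((k:ℝ) - 1) ^ q * V ≤ C := by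
    intro k hk
    have hk1 : (0:ℝ) ≤ (k:ℝ) - 1 := by
      have : (1:ℝ) ≤ (k:ℝ) := by exact_mod_cast hk
      linarith
    have hvol : volume (ball (y + (k:ℝ) • u) ε)
        = volume (ball (0 : EuclideanSpace ℝ (Fin n)) ε) :=
      Measure.addHaar_ball_center volume _ ε
    calc ((k:ℝ) - 1) ^ q * V
        = ((k:ℝ) - 1) ^ q * (volume (ball (y + (k:ℝ) • u) ε)).toReal := by rw [hV, hvol]
      _ ≤ ∫ z in ball (y + (k:ℝ) • u) ε, f z ^ q := by
          refine setIntegral_ge_of_const_le_real measurableSet_ball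
            (by rw [hvol]; exact measure_ball_lt_top.ne) (fun z hz => ?_) hLq.integrableOn
          exact Real.rpow_le_rpow hk1 (hlow k z hz) hq0.le
      _ ≤ C := setIntegral_le_integral hLq
          (Filter.Eventually.of_forall fun x => Real.rpow_nonneg (hf0 x) q)
  set M := (C / V) ^ (1/q) with hM
  have hMnn : 0 ≤ M := Real.rpow_nonneg (by positivity) _
  obtain ⟨k, hk⟩ := exists_nat_gt (M + 2)
  have hk1 : 1 ≤ k := by
    have : (1:ℝ) ≤ (k:ℝ) := by linarith
    exact_mod_cast this
  have hMq : M ^ q = C / V := by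
    rw [hM, ← Real.rpow_mul (by positivity), one_div_mul_cancel hq0.ne', Real.rpow_one]
  have hlt : C / V < ((k:ℝ) - 1) ^ q := by
    rw [← hMq]
    exact Real.rpow_lt_rpow hMnn (by linarith) hq0
  have := hbound k hk1
  rw [div_lt_iff₀ hVpos] at hlt
  linarith
end
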